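/- arXiv:1703.06720 — 2 statements merged into one kernel-verified Lean document; each statement's English description precedes it below -/
import Mathlib

section
/- If f ∈ C_b(ℝ, L₁(ℝ^{n-1})) (bounded uniformly continuous as a function of x_n with values in L₁) and η ∈ 𝒮(ℝ^n) has ∫ η = 1, then setting η_k(x) = k^{|a|} η(k^a x), the functions (η_k * f)(·, 0) converge to f(·, 0) in L₁(ℝ^{n-1}) as k → ∞. -/
open MeasureTheory Filter Topology
open scoped ENNReal

/-!
Since `∫ η = 1`, the error `(η_k * f)(x', 0) - f(x', 0)` is the `η`-average of
`f(x' - c_k z, s_k z) - f(x', 0)`, where `(c_k z, s_k z) = (k^{-a'} z', -k^{-a_n} z_n) → 0`.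
Minkowski's integral inequality bounds its `L¹` norm by `∫ |η z| G_k(z) dz`, with `G_k(z)` the
`L¹` distance between the shifted slice `f(· - c_k z, s_k z)` and the trace `f(·, 0)`. By the
triangle inequality `G_k(z)` is at most the `L¹`-modulus of `t ↦ f(·, t)` at `s_k z` plus that
of translation of `f(·, 0)` at `c_k z`, so it is bounded by `2 sup_t ‖f(·, t)‖₁` and tends to `0`
for each `z`; dominated convergence finishes the proof.
-/

theorem tendsto_lintegral_enorm_comp_add_sub {X E : Type*} [AddGroup X] [TopologicalSpace X]
    [IsTopologicalAddGroup X] [MeasurableSpace X] [BorelSpace X] [NormedAddCommGroup E]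
    {μ : Measure X} [IsLocallyFiniteMeasure μ] [μ.InnerRegularCompactLTTop] [μ.IsAddLeftInvariant]
    {g : X → E} (hg : Integrable g μ) :
    Tendsto (fun c => ∫⁻ x, ‖g (c + x) - g x‖ₑ ∂μ) (𝓝 0) (𝓝 0) := by
  have : Fact ((1 : ℝ≥0∞) ≠ ∞) := ⟨ENNReal.one_ne_top⟩
  have hcont : Tendsto (fun c : X => DomAddAct.mk c +ᵥ hg.toL1 g) (𝓝 0) (𝓝 (hg.toL1 g)) :=
    (DomAddAct.continuous_mk.vadd continuous_const).tendsto' 0 _ (by simp)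
  have hdist (c : X) :
      edist (DomAddAct.mk c +ᵥ hg.toL1 g) (hg.toL1 g) = ∫⁻ x, ‖g (c + x) - g x‖ₑ ∂μ := by
    rw [Lp.edist_def, eLpNorm_one_eq_lintegral_enorm]
    refine lintegral_congr_ae ?_
    filter_upwards [DomAddAct.vadd_Lp_ae_eq (DomAddAct.mk c) (hg.toL1 g),
      (measurePreserving_add_left μ c).quasiMeasurePreserving.ae_eq_comp hg.coeFn_toL1,
      hg.coeFn_toL1] with x h1 h2 h3
    rw [Pi.sub_apply, h1, Equiv.symm_apply_apply, vadd_eq_add, h3]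
    exact congrArg (‖· - g x‖ₑ) h2
  simpa [hdist] using tendsto_iff_edist_tendsto_0.mp hcont

section ApproximateIdentity

variable {Z 𝕜 E : Type*} [MeasurableSpace Z] {ν : Measure Z} [RCLike 𝕜]
  [NormedAddCommGroup E] [NormedSpace ℝ E] [NormedSpace 𝕜 E] [CompleteSpace E]
  {η : Z → 𝕜}

theorem enorm_integral_smul_sub_le (hη : Integrable η ν) (hη1 : ∫ z, η z ∂ν = 1) {g : Z → E}
    (hg : AEStronglyMeasurable g ν) (v : E) :
    ‖(∫ z, η z • g z ∂ν) - v‖ₑ ≤ ∫⁻ z, ‖η z‖ₑ * ‖g z - v‖ₑ ∂ν := by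
  simp_rw [← enorm_smul]
  by_cases hi : Integrable (fun z => η z • (g z - v)) ν
  · have hsplit : ∫ z, η z • g z ∂ν = (∫ z, η z • (g z - v) ∂ν) + ∫ z, η z • v ∂ν := by
      rw [← integral_add hi (hη.smul_const v)]
      simp_rw [smul_sub, sub_add_cancel]
    rw [hsplit, integral_smul_const, hη1, one_smul, add_sub_cancel_right]
    exact enorm_integral_le_lintegral_enorm _
  · have hinf : ∫⁻ z, ‖η z • (g z - v)‖ₑ ∂ν = ∞ :=
      not_lt_top_iff.mp fun hfin =>
        hi ⟨hη.aestronglyMeasurable.smul (hg.sub aestronglyMeasurable_const), hfin⟩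
    simp [hinf]

theorem lintegral_enorm_integral_smul_sub_le [SFinite ν] {X : Type*} [MeasurableSpace X]
    {μ : Measure X} [SFinite μ] (hη : Integrable η ν) (hη1 : ∫ z, η z ∂ν = 1) {g : X → Z → E}
    (hg : StronglyMeasurable (Function.uncurry g)) {h : X → E} (hh : StronglyMeasurable h) :
    ∫⁻ x, ‖(∫ z, η z • g x z ∂ν) - h x‖ₑ ∂μ ≤ ∫⁻ z, ‖η z‖ₑ * ∫⁻ x, ‖g x z - h x‖ₑ ∂μ ∂ν :=
  calc ∫⁻ x, ‖(∫ z, η z • g x z ∂ν) - h x‖ₑ ∂μ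
      ≤ ∫⁻ x, ∫⁻ z, ‖η z‖ₑ * ‖g x z - h x‖ₑ ∂ν ∂μ := lintegral_mono fun x =>
        enorm_integral_smul_sub_le hη hη1
          (hg.comp_measurable measurable_prodMk_left).aestronglyMeasurable (h x)
    _ = ∫⁻ z, ∫⁻ x, ‖η z‖ₑ * ‖g x z - h x‖ₑ ∂μ ∂ν :=
        lintegral_lintegral_swap <| (hη.aestronglyMeasurable.enorm.comp_snd).mul
          (hg.sub (hh.comp_measurable measurable_fst)).enorm.aemeasurable
    _ = ∫⁻ z, ‖η z‖ₑ * ∫⁻ x, ‖g x z - h x‖ₑ ∂μ ∂ν :=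
        lintegral_congr fun _ => lintegral_const_mul' _ _ enorm_ne_top

end ApproximateIdentity

section TranslationModulus

variable {X E : Type*} [NormedAddCommGroup E]

theorem lintegral_enorm_comp_sub_sub_le [AddGroup X] [MeasurableSpace X] [MeasurableAdd X]
    [MeasurableSub X] {μ : Measure X} [μ.IsAddRightInvariant] {u v : X → E}
    (hu : StronglyMeasurable u) (hv : StronglyMeasurable v) (w : X → E) (d : X) :
    ∫⁻ x, ‖u (x - d) - w x‖ₑ ∂μ ≤ ∫⁻ x, ‖u x - v x‖ₑ ∂μ + ∫⁻ x, ‖v (x - d) - w x‖ₑ ∂μ :=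
  calc ∫⁻ x, ‖u (x - d) - w x‖ₑ ∂μ
      ≤ ∫⁻ x, ‖u (x - d) - v (x - d)‖ₑ + ‖v (x - d) - w x‖ₑ ∂μ :=
        lintegral_mono fun x => by
          simpa only [edist_eq_enorm_sub] using edist_triangle (u (x - d)) (v (x - d)) (w x)
    _ = ∫⁻ x, ‖u x - v x‖ₑ ∂μ + ∫⁻ x, ‖v (x - d) - w x‖ₑ ∂μ := by
        have hm : Measurable fun x => ‖u (x - d) - v (x - d)‖ₑ :=
          (hu.sub hv).enorm.comp (measurable_sub_const d)
        rw [lintegral_add_left hm,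
          lintegral_sub_right_eq_self (fun x => ‖u x - v x‖ₑ) d]

theorem tendsto_lintegral_enorm_comp_sub_sub_nhds {T : Type*} [AddCommGroup X]
    [TopologicalSpace X] [IsTopologicalAddGroup X] [MeasurableSpace X] [BorelSpace X]
    {μ : Measure X} [IsLocallyFiniteMeasure μ] [μ.InnerRegularCompactLTTop] [μ.IsAddLeftInvariant]
    [TopologicalSpace T] {f : X → T → E} {t₀ : T} (hf : ∀ t, StronglyMeasurable (f · t))
    (hf₀ : Integrable (f · t₀) μ)
    (hf_cont : Tendsto (fun t => ∫⁻ x, ‖f x t - f x t₀‖ₑ ∂μ) (𝓝 t₀) (𝓝 0)) :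
    Tendsto (fun p : X × T => ∫⁻ x, ‖f (x - p.1) p.2 - f x t₀‖ₑ ∂μ) (𝓝 (0, t₀)) (𝓝 0) := by
  have hshift : Tendsto (fun d : X => ∫⁻ x, ‖f (x - d) t₀ - f x t₀‖ₑ ∂μ) (𝓝 0) (𝓝 0) := by
    simpa only [Function.comp_def, sub_eq_neg_add] using
      (tendsto_lintegral_enorm_comp_add_sub hf₀).comp (continuous_neg.tendsto' (0 : X) 0 neg_zero)
  refine tendsto_of_tendsto_of_tendsto_of_le_of_le tendsto_const_nhds ?_ (fun _ => zero_le)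
    fun p => lintegral_enorm_comp_sub_sub_le (hf p.2) (hf t₀) _ p.1
  simpa using
    (hf_cont.comp (continuous_snd.tendsto _)).add (hshift.comp (continuous_fst.tendsto _))

end TranslationModulus

theorem tendsto_lintegral_enorm_integral_smul_comp_sub_sub {ι X Z T 𝕜 E : Type*}
    {l : Filter ι} [l.IsCountablyGenerated]
    [AddCommGroup X] [TopologicalSpace X] [IsTopologicalAddGroup X] [SecondCountableTopology X]
    [MeasurableSpace X] [BorelSpace X] {μ : Measure X} [IsLocallyFiniteMeasure μ]
    [μ.InnerRegularCompactLTTop] [μ.IsAddLeftInvariant]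
    [MeasurableSpace Z] {ν : Measure Z} [SFinite ν] [TopologicalSpace T] [MeasurableSpace T]
    [RCLike 𝕜] [NormedAddCommGroup E] [NormedSpace ℝ E] [NormedSpace 𝕜 E] [CompleteSpace E]
    {f : X → T → E} {t₀ : T} (hf : StronglyMeasurable (Function.uncurry f))
    {C : ℝ≥0∞} (hC : C ≠ ∞) (hfC : ∀ t, ∫⁻ x, ‖f x t‖ₑ ∂μ ≤ C)
    (hf_cont : Tendsto (fun t => ∫⁻ x, ‖f x t - f x t₀‖ₑ ∂μ) (𝓝 t₀) (𝓝 0))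
    {η : Z → 𝕜} (hη : Integrable η ν) (hη1 : ∫ z, η z ∂ν = 1)
    {c : ι → Z → X} {s : ι → Z → T} (hc : ∀ i, Measurable (c i)) (hs : ∀ i, Measurable (s i))
    (hc0 : ∀ z, Tendsto (c · z) l (𝓝 0)) (hs0 : ∀ z, Tendsto (s · z) l (𝓝 t₀)) :
    Tendsto (fun i => ∫⁻ x, ‖(∫ z, η z • f (x - c i z) (s i z) ∂ν) - f x t₀‖ₑ ∂μ) l (𝓝 0) := by
  have hf_t (t : T) : StronglyMeasurable (f · t) := hf.comp_measurable measurable_prodMk_right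
  have hf₀ : Integrable (f · t₀) μ :=
    ⟨(hf_t t₀).aestronglyMeasurable, (hfC t₀).trans_lt hC.lt_top⟩
  have hF (i : ι) : StronglyMeasurable fun p : X × Z => f (p.1 - c i p.2) (s i p.2) :=
    hf.comp_measurable ((measurable_fst.sub ((hc i).comp measurable_snd)).prodMk
      ((hs i).comp measurable_snd))
  have hG_meas (i : ι) : Measurable fun z => ∫⁻ x, ‖f (x - c i z) (s i z) - f x t₀‖ₑ ∂μ :=
    Measurable.lintegral_prod_right'
      (f := fun q : Z × X => ‖f (q.2 - c i q.1) (s i q.1) - f q.2 t₀‖ₑ)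
      (((hF i).comp_measurable measurable_swap).sub
        ((hf_t t₀).comp_measurable measurable_snd)).enorm
  have hG_le (i : ι) (z : Z) : ∫⁻ x, ‖f (x - c i z) (s i z) - f x t₀‖ₑ ∂μ ≤ C + C := by
    refine (lintegral_enorm_comp_sub_sub_le (v := fun _ => 0) (hf_t _) stronglyMeasurable_const
      _ (c i z)).trans ?_
    simpa using add_le_add (hfC (s i z)) (hfC t₀)
  have hG0 (z : Z) : Tendsto (fun i => ∫⁻ x, ‖f (x - c i z) (s i z) - f x t₀‖ₑ ∂μ) l (𝓝 0) :=
    (tendsto_lintegral_enorm_comp_sub_sub_nhds hf_t hf₀ hf_cont).comp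
      ((hc0 z).prodMk_nhds (hs0 z))
  have hCC : C + C ≠ ∞ := ENNReal.add_ne_top.2 ⟨hC, hC⟩
  have hmajorant : Tendsto (fun i => ∫⁻ z, ‖η z‖ₑ *
      ∫⁻ x, ‖f (x - c i z) (s i z) - f x t₀‖ₑ ∂μ ∂ν) l (𝓝 0) := by
    simpa using tendsto_lintegral_filter_of_dominated_convergence' (f := fun _ => 0)
      (F := fun i z => ‖η z‖ₑ * ∫⁻ x, ‖f (x - c i z) (s i z) - f x t₀‖ₑ ∂μ)
      (fun z => ‖η z‖ₑ * (C + C))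
      (Eventually.of_forall fun i => hη.aestronglyMeasurable.enorm.mul (hG_meas i).aemeasurable)
      (Eventually.of_forall fun i => ae_of_all _ fun z => mul_le_mul_right (hG_le i z) _)
      (by rw [lintegral_mul_const' _ _ hCC]; exact ENNReal.mul_ne_top hη.2.ne hCC)
      (ae_of_all _ fun z => by simpa using ENNReal.Tendsto.const_mul (hG0 z) (.inr enorm_ne_top))
  exact tendsto_of_tendsto_of_tendsto_of_le_of_le tendsto_const_nhds hmajorant (fun _ => zero_le)
    fun i => lintegral_enorm_integral_smul_sub_le hη hη1 (hF i) (hf_t t₀)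

theorem tendsto_integral_norm_of_tendsto_lintegral_enorm {ι α E : Type*} [MeasurableSpace α]
    {μ : Measure α} [NormedAddCommGroup E] {l : Filter ι} {F : ι → α → E}
    (h : Tendsto (fun i => ∫⁻ x, ‖F i x‖ₑ ∂μ) l (𝓝 0)) :
    Tendsto (fun i => ∫ x, ‖F i x‖ ∂μ) l (𝓝 0) := by
  refine squeeze_zero (fun _ => integral_nonneg fun _ => norm_nonneg _) (fun i => ?_)
    (by simpa using (ENNReal.tendsto_toReal ENNReal.zero_ne_top).comp h)
  calc ∫ x, ‖F i x‖ ∂μ ≤ ‖∫ x, ‖F i x‖ ∂μ‖ := Real.le_norm_self _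
    _ ≤ (∫⁻ x, ‖F i x‖ₑ ∂μ).toReal := by
      simpa only [norm_norm, ofReal_norm] using
        norm_integral_le_lintegral_norm (μ := μ) (fun x => ‖F i x‖)

theorem tendsto_lintegral_enorm_sub_of_integral_norm_sub_le {α E : Type*}
    [MeasurableSpace α] {μ : Measure α} [NormedAddCommGroup E] {f : α → ℝ → E} {t₀ : ℝ}
    (hint : ∀ t, Integrable (f · t) μ)
    (hcont : ∀ ε : ℝ, 0 < ε → ∃ δ : ℝ, 0 < δ ∧ ∀ t : ℝ, |t - t₀| < δ →
      ∫ x, ‖f x t - f x t₀‖ ∂μ ≤ ε) :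
    Tendsto (fun t => ∫⁻ x, ‖f x t - f x t₀‖ₑ ∂μ) (𝓝 t₀) (𝓝 0) := by
  have hreal : Tendsto (fun t => ∫ x, ‖f x t - f x t₀‖ ∂μ) (𝓝 t₀) (𝓝 0) := by
    refine Metric.tendsto_nhds_nhds.2 fun ε hε => ?_
    obtain ⟨δ, hδ, hδε⟩ := hcont (ε / 2) (half_pos hε)
    refine ⟨δ, hδ, fun t ht => ?_⟩
    rw [Real.dist_eq, sub_zero, abs_of_nonneg (integral_nonneg fun _ => norm_nonneg _)]
    exact (hδε t ht).trans_lt (half_lt_self hε)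
  rw [← ENNReal.ofReal_zero]
  exact (ENNReal.tendsto_ofReal hreal).congr fun t =>
    ofReal_integral_norm_eq_lintegral_enorm ((hint t).sub (hint t₀))

/-- If `f ∈ C_b(ℝ, L₁(ℝ^{n-1}))` and `η` is Schwartz with `∫ η = 1`, then the
anisotropically scaled convolutions `(η_k * f)(·, 0)` converge to `f(·, 0)` in `L₁`. -/
theorem anisotropic_approximate_identity_trace
    (m : ℕ) (a' : Fin m → ℝ) (aN : ℝ) (ha' : ∀ i, 1 ≤ a' i) (haN : 1 ≤ aN)
    (f : (Fin m → ℝ) → ℝ → ℂ)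
    (hmeas : Measurable (Function.uncurry f))
    (hint : ∀ t : ℝ, Integrable (fun x' => f x' t))
    (hbd : ∃ C : ℝ, ∀ t : ℝ, (∫ x', ‖f x' t‖) ≤ C)
    (hucont : ∀ ε : ℝ, 0 < ε → ∃ δ : ℝ, 0 < δ ∧ ∀ s t : ℝ, |s - t| < δ →
      (∫ x', ‖f x' s - f x' t‖) ≤ ε)
    (η : SchwartzMap ((Fin m → ℝ) × ℝ) ℂ)
    (hη : (∫ z, η z) = 1) :
    Tendsto (fun k : ℕ =>
      ∫ x' : Fin m → ℝ,
        ‖(∫ z : (Fin m → ℝ) × ℝ,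
            η z * f (fun i => x' i - (k : ℝ) ^ (-(a' i)) * z.1 i)
              (-((k : ℝ) ^ (-aN)) * z.2)) - f x' 0‖)
      atTop (𝓝 0) := by
  obtain ⟨C, hC⟩ := hbd
  have hfC (t : ℝ) : ∫⁻ x', ‖f x' t‖ₑ ≤ ENNReal.ofReal C := by
    rw [← ofReal_integral_norm_eq_lintegral_enorm (hint t)]
    exact ENNReal.ofReal_le_ofReal (hC t)
  have hscale {b : ℝ} (hb : 1 ≤ b) : Tendsto (fun k : ℕ => (k : ℝ) ^ (-b)) atTop (𝓝 0) :=
    (tendsto_rpow_neg_atTop (by linarith)).comp tendsto_natCast_atTop_atTop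
  -- `HasTemperateGrowth` is found for the product measure, which is `volume` by definition.
  have hη_int : Integrable η :=
    η.integrable (μ := (volume : Measure (Fin m → ℝ)).prod volume)
  exact tendsto_integral_norm_of_tendsto_lintegral_enorm <|
    tendsto_lintegral_enorm_integral_smul_comp_sub_sub hmeas.stronglyMeasurable
      ENNReal.ofReal_ne_top hfC
      (tendsto_lintegral_enorm_sub_of_integral_norm_sub_le hint fun ε hε =>
        (hucont ε hε).imp fun _ hδ => ⟨hδ.1, fun t => hδ.2 t 0⟩) hη_int hη
      (c := fun (k : ℕ) z i => (k : ℝ) ^ (-(a' i)) * z.1 i)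
      (s := fun (k : ℕ) z => -((k : ℝ) ^ (-aN)) * z.2) (fun _ => by fun_prop) (fun _ => by fun_prop)
      (fun z => tendsto_pi_nhds.2 fun i => by simpa using (hscale (ha' i)).mul_const (z.1 i))
      (fun z => by simpa using (hscale haN).neg.mul_const z.2)
end

section
/- If h is a tempered distribution on ℝ^n which is a continuous function of polynomial growth and its Fourier transform is supported in the anisotropic ball {ξ : |ξ|_a ≤ A}, then for every fixed x' ∈ ℝ^{n-1} the one-variable Fourier transform (in x_n) of h(x', ·) is supported in {ξ_n ∈ ℝ : |ξ_n| ≤ A^{a_n}}. -/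
/-!
For `ψ ∈ 𝓢(ℝⁿ⁻¹)`, the test function `ψ ⊗ φ` is supported where `|ξₙ| > A ^ aₙ`, hence, by
`|ξₙ| ^ (1 / aₙ) ≤ |ξ|_a`, where `|ξ|_a > A`; so `h` annihilates its Fourier transform
`𝓕ψ ⊗ 𝓕φ`. By Fubini this says that the continuous function `x' ↦ ∫ h (x', t) 𝓕φ(t) dt`
integrates to zero against every `𝓕ψ`, that is against every Schwartz function, so it vanishes.
-/

open MeasureTheory FourierTransform SchwartzMap Filter
open scoped ContDiff

theorem ContinuousLinearMap.norm_iteratedFDeriv_comp_right_le {𝕜 E F G : Type*}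
    [NontriviallyNormedField 𝕜] [NormedAddCommGroup E] [NormedSpace 𝕜 E] [NormedAddCommGroup F]
    [NormedSpace 𝕜 F] [NormedAddCommGroup G] [NormedSpace 𝕜 G] (g : E →L[𝕜] F) {f : F → G}
    {n : ℕ} (hf : ContDiff 𝕜 n f) (x : E) :
    ‖iteratedFDeriv 𝕜 n (f ∘ g) x‖ ≤ ‖iteratedFDeriv 𝕜 n f (g x)‖ * ‖g‖ ^ n := by
  rw [g.iteratedFDeriv_comp_right hf x le_rfl]
  simpa using ContinuousMultilinearMap.norm_compContinuousLinearMap_le _ fun _ : Fin n => g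

namespace SchwartzMap

variable {E F : Type*} [NormedAddCommGroup E] [NormedSpace ℝ E]
  [NormedAddCommGroup F] [NormedSpace ℝ F]

theorem one_add_norm_pow_mul_norm_iteratedFDeriv_comp_le {V : Type*} [NormedAddCommGroup V]
    [NormedSpace ℝ V] (f : 𝓢(F, V)) (P : E →L[ℝ] F) (hP : ‖P‖ ≤ 1) (k i : ℕ) (x : E) :
    (1 + ‖P x‖) ^ k * ‖iteratedFDeriv ℝ i (f ∘ P) x‖ ≤
      2 ^ k * (Finset.Iic (k, i)).sup (fun m => SchwartzMap.seminorm ℝ m.1 m.2) f := by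
  refine le_trans ?_ (one_add_le_sup_seminorm_apply (𝕜 := ℝ) (m := (k, i)) le_rfl le_rfl f (P x))
  gcongr
  exact (P.norm_iteratedFDeriv_comp_right_le (f.smooth i) x).trans
    (mul_le_of_le_one_right (norm_nonneg _) (pow_le_one₀ (norm_nonneg _) hP))

noncomputable def tensor (f : 𝓢(E, ℂ)) (g : 𝓢(F, ℂ)) : 𝓢(E × F, ℂ) where
  toFun p := f p.1 * g p.2
  smooth' := (f.smooth'.comp contDiff_fst).mul (g.smooth'.comp contDiff_snd)
  decay' k n := by
    obtain ⟨Bf, hf⟩ : ∃ B : ℕ → ℝ, ∀ i (p : E × F),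
        (1 + ‖p.1‖) ^ k * ‖iteratedFDeriv ℝ i (f ∘ Prod.fst) p‖ ≤ B i :=
      ⟨_, one_add_norm_pow_mul_norm_iteratedFDeriv_comp_le f _
        (ContinuousLinearMap.norm_fst_le ℝ E F) k⟩
    obtain ⟨Bg, hg⟩ : ∃ B : ℕ → ℝ, ∀ i (p : E × F),
        (1 + ‖p.2‖) ^ k * ‖iteratedFDeriv ℝ i (g ∘ Prod.snd) p‖ ≤ B i :=
      ⟨_, one_add_norm_pow_mul_norm_iteratedFDeriv_comp_le g _
        (ContinuousLinearMap.norm_snd_le ℝ E F) k⟩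
    refine ⟨∑ i ∈ Finset.range (n + 1), (n.choose i : ℝ) * (Bf i * Bg (n - i)), fun p => ?_⟩
    have hnorm : ‖p‖ ^ k ≤ (1 + ‖p.1‖) ^ k * (1 + ‖p.2‖) ^ k := by
      rw [← mul_pow, Prod.norm_def]
      gcongr
      apply max_le <;> nlinarith [norm_nonneg p.1, norm_nonneg p.2]
    calc ‖p‖ ^ k * ‖iteratedFDeriv ℝ n (fun p : E × F => f p.1 * g p.2) p‖
        ≤ (1 + ‖p.1‖) ^ k * (1 + ‖p.2‖) ^ k * ∑ i ∈ Finset.range (n + 1), (n.choose i : ℝ) *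
            ‖iteratedFDeriv ℝ i (f ∘ Prod.fst) p‖ * ‖iteratedFDeriv ℝ (n - i) (g ∘ Prod.snd) p‖ :=
          mul_le_mul hnorm (norm_iteratedFDeriv_mul_le (f.smooth'.comp contDiff_fst)
            (g.smooth'.comp contDiff_snd) p (mod_cast le_top)) (norm_nonneg _) (by positivity)
      _ = ∑ i ∈ Finset.range (n + 1), (n.choose i : ℝ) *
            (((1 + ‖p.1‖) ^ k * ‖iteratedFDeriv ℝ i (f ∘ Prod.fst) p‖) *
              ((1 + ‖p.2‖) ^ k * ‖iteratedFDeriv ℝ (n - i) (g ∘ Prod.snd) p‖)) := by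
          rw [Finset.mul_sum]
          exact Finset.sum_congr rfl fun i _ => by ring
      _ ≤ _ := by
          gcongr with i
          exacts [(mul_nonneg (by positivity) (norm_nonneg _)).trans (hf i p), hf i p, hg (n - i) p]

@[simp]
theorem tensor_apply (f : 𝓢(E, ℂ)) (g : 𝓢(F, ℂ)) (p : E × F) : f.tensor g p = f p.1 * g p.2 := rfl

end SchwartzMap

section TemperateGrowthMeasure

variable {D : Type*} [NormedAddCommGroup D] [NormedSpace ℝ D] [MeasurableSpace D] [BorelSpace D]
  [SecondCountableTopology D] {μ : Measure D} [μ.HasTemperateGrowth]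

theorem SchwartzMap.integrable_one_add_norm_pow_mul {V : Type*} [NormedAddCommGroup V]
    [NormedSpace ℝ V] (f : 𝓢(D, V)) (N : ℕ) :
    Integrable (fun x => (1 + ‖x‖) ^ N * ‖f x‖) μ := by
  refine (((f.integrable (μ := μ)).norm.add (f.integrable_pow_mul μ N)).const_mul
    (2 ^ (N - 1))).mono' (by fun_prop) (ae_of_all _ fun x => ?_)
  rw [Real.norm_of_nonneg (by positivity)]
  calc (1 + ‖x‖) ^ N * ‖f x‖ ≤ 2 ^ (N - 1) * (1 ^ N + ‖x‖ ^ N) * ‖f x‖ := by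
        gcongr; exact add_pow_le zero_le_one (norm_nonneg x) N
    _ = _ := by simp only [Pi.add_apply]; ring

theorem integrable_mul_schwartz_of_norm_le {h : D → ℂ} (hm : AEStronglyMeasurable h μ) {C : ℝ}
    {N : ℕ} (hb : ∀ x, ‖h x‖ ≤ C * (1 + ‖x‖) ^ N) (f : 𝓢(D, ℂ)) :
    Integrable (fun x => h x * f x) μ := by
  refine ((f.integrable_one_add_norm_pow_mul N).const_mul C).mono' (hm.mul (by fun_prop))
    (ae_of_all _ fun x => ?_)
  rw [norm_mul, ← mul_assoc]
  exact mul_le_mul_of_nonneg_right (hb x) (norm_nonneg _)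

theorem continuous_integral_mul_schwartz {X : Type*} [SeminormedAddCommGroup X] {H : X → D → ℂ}
    (hH : Continuous H.uncurry) {C : ℝ} {N : ℕ}
    (hb : ∀ x t, ‖H x t‖ ≤ C * ((1 + ‖x‖) * (1 + ‖t‖)) ^ N) (w : 𝓢(D, ℂ)) :
    Continuous (fun x => ∫ t, H x t * w t ∂μ) := by
  refine continuous_iff_continuousAt.2 fun x₀ => continuousAt_of_dominated
    (bound := fun t => C * (2 + ‖x₀‖) ^ N * ((1 + ‖t‖) ^ N * ‖w t‖)) ?_ ?_
    ((w.integrable_one_add_norm_pow_mul N).const_mul _) (ae_of_all _ fun t => ?_)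
  · exact Eventually.of_forall fun x =>
      ((hH.comp (Continuous.prodMk_right x)).mul w.continuous).aestronglyMeasurable
  · filter_upwards [Metric.closedBall_mem_nhds x₀ one_pos] with x hx
    refine ae_of_all _ fun t => ?_
    have hx : ‖x‖ ≤ ‖x₀‖ + 1 := by
      have := norm_le_norm_add_norm_sub' x x₀
      rw [Metric.mem_closedBall, dist_eq_norm] at hx
      linarith
    have hC : 0 ≤ C := by simpa using (norm_nonneg _).trans (hb 0 0)
    rw [norm_mul, ← mul_assoc, mul_assoc C, ← mul_pow]
    gcongr
    calc ‖H x t‖ ≤ C * ((1 + ‖x‖) * (1 + ‖t‖)) ^ N := hb x t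
      _ ≤ C * ((2 + ‖x₀‖) * (1 + ‖t‖)) ^ N := by gcongr C * (?_ * _) ^ N; linarith
  · exact ((hH.comp (Continuous.prodMk_left t)).mul continuous_const).continuousAt

end TemperateGrowthMeasure

theorem eq_zero_of_forall_integral_schwartz_mul_eq_zero {E : Type*} [NormedAddCommGroup E]
    [NormedSpace ℝ E] [FiniteDimensional ℝ E] [MeasurableSpace E] [BorelSpace E] {μ : Measure E}
    [μ.IsOpenPosMeasure] [IsLocallyFiniteMeasure μ] {g : E → ℂ} (hg : Continuous g)
    (h : ∀ η : 𝓢(E, ℂ), ∫ x, η x * g x ∂μ = 0) : g = 0 := by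
  refine (hg.ae_eq_iff_eq μ continuous_zero).1 <|
    ae_eq_zero_of_integral_contDiff_smul_eq_zero hg.locallyIntegrable fun u hu hsupp => ?_
  have hη := h ((hsupp.comp_left Complex.ofReal_zero).toSchwartzMap
    (Complex.ofRealCLM.contDiff.comp hu))
  simp_rw [Complex.real_smul]
  exact hη

namespace EuclideanSpace

variable (m : ℕ)

noncomputable def snocCLE : (EuclideanSpace ℝ (Fin m) × ℝ) ≃L[ℝ] EuclideanSpace ℝ (Fin (m + 1)) :=
  LinearEquiv.toContinuousLinearEquiv
    { toFun p := WithLp.toLp 2 (Fin.snoc p.1 p.2)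
      invFun x := (WithLp.toLp 2 (Fin.init x), x (Fin.last m))
      map_add' p q := by
        ext i; refine Fin.lastCases ?_ (fun j => ?_) i <;> simp
      map_smul' c p := by
        ext i; refine Fin.lastCases ?_ (fun j => ?_) i <;> simp
      left_inv p := by simp
      right_inv x := by simp }

variable {m}

@[simp]
theorem snocCLE_apply (y : EuclideanSpace ℝ (Fin m)) (t : ℝ) :
    snocCLE m (y, t) = WithLp.toLp 2 (Fin.snoc y t) := rfl

@[simp]
theorem snocCLE_symm_apply (x : EuclideanSpace ℝ (Fin (m + 1))) :
    (snocCLE m).symm x = (WithLp.toLp 2 (Fin.init x), x (Fin.last m)) := rfl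

theorem measurePreserving_snocCLE :
    MeasurePreserving (snocCLE m) (volume.prod volume) volume := by
  have h := (PiLp.volume_preserving_toLp (Fin (m + 1))).comp
    (((volume_preserving_piFinSuccAbove (fun _ => ℝ) (Fin.last m)).symm.comp
      (Measure.measurePreserving_swap (μ := volume) (ν := volume))).comp
      ((PiLp.volume_preserving_ofLp (Fin m)).prod (MeasurePreserving.id volume)))
  convert h using 1
  · rfl
  · funext ⟨y, t⟩
    simp [Fin.snocEquiv]

theorem inner_snocCLE (p : EuclideanSpace ℝ (Fin m) × ℝ) (x : EuclideanSpace ℝ (Fin (m + 1))) :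
    inner ℝ (snocCLE m p) x =
      inner ℝ p.1 ((snocCLE m).symm x).1 + p.2 * ((snocCLE m).symm x).2 := by
  obtain ⟨y, t⟩ := p
  simp [PiLp.inner_apply, Fin.sum_univ_castSucc, Fin.init, mul_comm]

theorem norm_snocCLE_sq (p : EuclideanSpace ℝ (Fin m) × ℝ) :
    ‖snocCLE m p‖ ^ 2 = ‖p.1‖ ^ 2 + p.2 ^ 2 := by
  obtain ⟨y, t⟩ := p
  simp [EuclideanSpace.norm_sq_eq, Fin.sum_univ_castSucc]

theorem one_add_norm_snocCLE_le (p : EuclideanSpace ℝ (Fin m) × ℝ) :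
    1 + ‖snocCLE m p‖ ≤ (1 + ‖p.1‖) * (1 + ‖p.2‖) := by
  have : ‖snocCLE m p‖ ≤ ‖p.1‖ + ‖p.2‖ := by
    refine le_of_sq_le_sq ?_ (by positivity)
    rw [norm_snocCLE_sq, add_sq, Real.norm_eq_abs, sq_abs]
    nlinarith [norm_nonneg p.1, abs_nonneg p.2]
  nlinarith [norm_nonneg p.1, norm_nonneg p.2]

theorem integral_eq_integral_integral_snocCLE {G : Type*} [NormedAddCommGroup G] [NormedSpace ℝ G]
    {F : EuclideanSpace ℝ (Fin (m + 1)) → G} (hF : Integrable F) :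
    ∫ x, F x = ∫ y, ∫ t, F (snocCLE m (y, t)) := by
  have hemb := (snocCLE m).toHomeomorph.measurableEmbedding
  rw [← measurePreserving_snocCLE.integral_comp hemb, integral_prod]
  exact (measurePreserving_snocCLE.integrable_comp_emb hemb).2 hF

theorem continuous_integral_snocCLE_mul_schwartz {h : EuclideanSpace ℝ (Fin (m + 1)) → ℂ}
    (hc : Continuous h) {C : ℝ} {N : ℕ} (hb : ∀ x, ‖h x‖ ≤ C * (1 + ‖x‖) ^ N) (w : 𝓢(ℝ, ℂ)) :
    Continuous fun y => ∫ t, h (snocCLE m (y, t)) * w t := by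
  have hC : 0 ≤ C := by simpa using (norm_nonneg _).trans (hb 0)
  refine continuous_integral_mul_schwartz (H := fun y t => h (snocCLE m (y, t)))
    (C := C) (N := N) (hc.comp (snocCLE m).continuous) (fun y t => ?_) w
  calc ‖h (snocCLE m (y, t))‖ ≤ C * (1 + ‖snocCLE m (y, t)‖) ^ N := hb _
    _ ≤ C * ((1 + ‖y‖) * (1 + ‖t‖)) ^ N := by gcongr; exact one_add_norm_snocCLE_le (y, t)

end EuclideanSpace

namespace SchwartzMap

variable {m : ℕ}
open EuclideanSpace

noncomputable def tensorLast (ψ : 𝓢(EuclideanSpace ℝ (Fin m), ℂ)) (φ : 𝓢(ℝ, ℂ)) :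
    𝓢(EuclideanSpace ℝ (Fin (m + 1)), ℂ) :=
  compCLMOfContinuousLinearEquiv ℂ (snocCLE m).symm (ψ.tensor φ)

variable (ψ : 𝓢(EuclideanSpace ℝ (Fin m), ℂ)) (φ : 𝓢(ℝ, ℂ))

theorem tensorLast_apply (x : EuclideanSpace ℝ (Fin (m + 1))) :
    ψ.tensorLast φ x = ψ ((snocCLE m).symm x).1 * φ (x (Fin.last m)) := rfl

@[simp]
theorem tensorLast_snocCLE (p : EuclideanSpace ℝ (Fin m) × ℝ) :
    ψ.tensorLast φ (snocCLE m p) = ψ p.1 * φ p.2 := by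
  simp [tensorLast]

theorem tsupport_tensorLast_subset :
    tsupport (ψ.tensorLast φ) ⊆ (fun x => x (Fin.last m)) ⁻¹' tsupport φ := by
  refine closure_minimal (fun x hx => subset_closure (right_ne_zero_of_mul hx))
    ((isClosed_tsupport φ).preimage (by fun_prop))

theorem fourier_tensorLast : 𝓕 (ψ.tensorLast φ) = (𝓕 ψ).tensorLast (𝓕 φ) := by
  ext x
  rw [fourier_coe, Real.fourier_eq', tensorLast_apply, fourier_coe, fourier_coe, Real.fourier_eq',
    Real.fourier_eq', ← integral_prod_mul, ← measurePreserving_snocCLE.integral_comp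
    (snocCLE m).toHomeomorph.measurableEmbedding]
  congr 1 with p
  simp only [inner_snocCLE, tensorLast_snocCLE, smul_eq_mul, snocCLE_symm_apply,
    Real.inner_apply, mul_add, Complex.ofReal_add, add_mul, Complex.exp_add]
  ring

theorem integral_mul_tensorLast {h : EuclideanSpace ℝ (Fin (m + 1)) → ℂ}
    (hint : Integrable fun x => h x * ψ.tensorLast φ x) :
    ∫ x, h x * ψ.tensorLast φ x = ∫ y, ψ y * ∫ t, h (snocCLE m (y, t)) * φ t := by
  rw [integral_eq_integral_integral_snocCLE hint]
  congr 1 with y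
  rw [← integral_const_mul]
  congr 1 with t
  rw [tensorLast_snocCLE]
  ring

end SchwartzMap

/-- If the Fourier transform of a continuous tempered function `h` on `ℝⁿ` is supported
in the anisotropic ball `{|ξ|_a ≤ A}`, then for each fixed `x'` the one-variable Fourier
transform of `h(x', ·)` is supported in `{|ξ_n| ≤ A^{a_n}}`. -/
theorem partial_spectrum_of_anisotropic_band_limited
    (m : ℕ) (a : Fin (m + 1) → ℝ) (ha : ∀ i, 1 ≤ a i) (A : ℝ) (hA : 0 < A)
    (anorm : EuclideanSpace ℝ (Fin (m + 1)) → ℝ)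
    (hcomp : ∀ ξ : EuclideanSpace ℝ (Fin (m + 1)),
      |ξ (Fin.last m)| ^ ((1 : ℝ) / a (Fin.last m)) ≤ anorm ξ)
    (h : EuclideanSpace ℝ (Fin (m + 1)) → ℂ)
    (hc : Continuous h)
    (hgrowth : ∃ C : ℝ, ∃ N : ℕ, ∀ x, ‖h x‖ ≤ C * (1 + ‖x‖) ^ N)
    (hspec : ∀ φ : SchwartzMap (EuclideanSpace ℝ (Fin (m + 1))) ℂ,
      tsupport ⇑φ ⊆ {ξ | A < anorm ξ} → (∫ x, h x * 𝓕 ⇑φ x) = 0) :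
    ∀ x' : EuclideanSpace ℝ (Fin m), ∀ φ : SchwartzMap ℝ ℂ,
      tsupport ⇑φ ⊆ {ξn : ℝ | A ^ (a (Fin.last m)) < |ξn|} →
      (∫ t : ℝ, h (WithLp.toLp 2 (Fin.snoc x' t : Fin (m + 1) → ℝ) :
          EuclideanSpace ℝ (Fin (m + 1))) * 𝓕 ⇑φ t) = 0 := by
  intro x' φ hφ
  obtain ⟨C, N, hb⟩ := hgrowth
  have hsupp (ψ : 𝓢(EuclideanSpace ℝ (Fin m), ℂ)) :
      tsupport (ψ.tensorLast φ) ⊆ {ξ | A < anorm ξ} := fun ξ hξ => by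
    have hlast : A ^ a (Fin.last m) < |ξ (Fin.last m)| := hφ (tsupport_tensorLast_subset ψ φ hξ)
    refine lt_of_lt_of_le ?_ (hcomp ξ)
    rwa [one_div, Real.lt_rpow_inv_iff_of_pos hA.le (abs_nonneg _)
      (zero_lt_one.trans_le (ha _))]
  suffices (fun y => ∫ t, h (EuclideanSpace.snocCLE m (y, t)) * 𝓕 φ t) = 0 from
    congrFun this x'
  refine eq_zero_of_forall_integral_schwartz_mul_eq_zero (μ := volume)
    (EuclideanSpace.continuous_integral_snocCLE_mul_schwartz hc hb (𝓕 φ)) fun η => ?_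
  have hη := hspec _ (hsupp (𝓕⁻ η))
  rwa [← fourier_coe, fourier_tensorLast, fourier_fourierInv_eq, integral_mul_tensorLast _ _
    (integrable_mul_schwartz_of_norm_le hc.aestronglyMeasurable hb _)] at hη
end
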